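/- arXiv:2004.12517 — 2 statements merged into one kernel-verified Lean document; each statement's English description precedes it below -/
import Mathlib

section
/- Let P be a finite PIP. Define the cubical complex ⊞_P whose i-dimensional faces are pairs (I, M) where I is a consistent downset of P and M ⊆ max I with |M| = i. Then the f-polynomial of ⊞_P satisfies f(⊞_P, t) = f(Δ_P, 1+t), where Δ_P is the crossing complex of P. Equivalently, Σ_i f_i(⊞_P) t^i = Σ_j f_{j-1}(Δ_P) (1+t)^j, where f_i(⊞_P) counts pairs (I,M) with |M| = i and f_{j-1}(Δ_P) counts consistent antichains of cardinality j. -/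
open Finset

variable {P : Type*} [Fintype P] [DecidableEq P] [PartialOrder P]

/-- A subset is consistent if it contains no inconsistent pair. -/
def Consistent (incons : P → P → Prop) (S : Finset P) : Prop :=
  ∀ a ∈ S, ∀ b ∈ S, ¬ incons a b

/-- A downset (order ideal). -/
def IsDownset (I : Finset P) : Prop :=
  ∀ x ∈ I, ∀ y, y ≤ x → y ∈ I

open Classical in
/-- The maximal elements of a finite set. -/
noncomputable def maxElems (I : Finset P) : Finset P :=
  I.filter (fun x => ∀ y ∈ I, ¬ x < y)

open Classical in
/-- The downset generated by a set. -/
noncomputable def downGen (A : Finset P) : Finset P :=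
  Finset.univ.filter (fun x => ∃ a ∈ A, x ≤ a)

/-- A consistent antichain: the faces of the crossing complex `Δ_P`. -/
def ConsAntichain (incons : P → P → Prop) (A : Finset P) : Prop :=
  (∀ a ∈ A, ∀ b ∈ A, a ≠ b → ¬ a ≤ b) ∧ Consistent incons A

/-- A face of the cubical complex `⊞_P`: a pair (I, M) with I a consistent
downset and M ⊆ max I. -/
def IsFace (incons : P → P → Prop) (I M : Finset P) : Prop :=
  IsDownset I ∧ Consistent incons I ∧ M ⊆ maxElems I

/-- The face-containment order on faces of `⊞_P`:
`C(I',M') ⊆ C(I,M)` iff `M' ⊆ M` and `I \ M ⊆ I' ⊆ I`. -/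
def FaceLE (p q : Finset P × Finset P) : Prop :=
  p.2 ⊆ q.2 ∧ q.1 \ q.2 ⊆ p.1 ∧ p.1 ⊆ q.1

open Classical in
/-- `f_i(⊞_P)`: the number of `i`-dimensional faces `C(I,M)` of the cubical
complex `⊞_P`, i.e. pairs `(I, M)` with `I` a consistent downset, `M ⊆ max I`
and `|M| = i`. -/
noncomputable def cubeFaceCount (incons : P → P → Prop) (i : ℕ) : ℕ :=
  (Finset.univ.filter (fun p : Finset P × Finset P =>
    IsDownset p.1 ∧ Consistent incons p.1 ∧ p.2 ⊆ maxElems p.1 ∧ p.2.card = i)).card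

open Classical in
/-- `f_{j-1}(Δ_P)`: the number of consistent antichains of cardinality `j`. -/
noncomputable def antichainCount (incons : P → P → Prop) (j : ℕ) : ℕ :=
  (Finset.univ.filter (fun A : Finset P => ConsAntichain incons A ∧ A.card = j)).card


/-!
A face `(I, M)` of `⊞_P` is determined by the antichain `max I` together with the subset `M` of
it, since a downset is recovered from its maximal elements. Because inconsistency is inherited
upwards, `I ↦ max I` and `A ↦ ↓A` are inverse bijections between consistent downsets and
consistent antichains. Summing `t ^ |M|` over the subsets `M` of a fixed antichain `A` gives
`(1 + t) ^ |A|`.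
-/

lemma sum_range_card_filter_mul {α R : Type*} [CommSemiring R] (s : Finset α) (f : α → ℕ)
    {n : ℕ} (hf : ∀ x ∈ s, f x ≤ n) (g : ℕ → R) :
    ∑ i ∈ range (n + 1), (#{x ∈ s | f x = i} : R) * g i = ∑ x ∈ s, g (f x) := by
  rw [← sum_fiberwise_of_maps_to (g := f) (t := range (n + 1))
    fun x hx => mem_range.2 (Nat.lt_succ_of_le (hf x hx))]
  refine sum_congr rfl fun i _ => ?_
  rw [sum_congr rfl fun x hx => by rw [(mem_filter.1 hx).2], sum_const, nsmul_eq_mul]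

lemma one_add_pow_card_eq_sum_powerset {R : Type*} [CommSemiring R] {α : Type*} (t : R)
    (A : Finset α) : (1 + t) ^ A.card = ∑ M ∈ A.powerset, t ^ M.card := by
  simpa [add_comm] using (sum_pow_mul_eq_add_pow t 1 A).symm

section Faces

variable {α : Type*} {incons : α → α → Prop}

@[simp]
lemma mem_downGen [Fintype α] [PartialOrder α] {A : Finset α} {x : α} :
    x ∈ downGen A ↔ ∃ a ∈ A, x ≤ a := by
  simp [downGen]

@[simp]
lemma mem_maxElems [Fintype α] [DecidableEq α] [PartialOrder α] {I : Finset α} {x : α} :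
    x ∈ maxElems I ↔ x ∈ I ∧ ∀ y ∈ I, ¬ x < y := by
  simp [maxElems]

lemma maxElems_subset [Fintype α] [DecidableEq α] [PartialOrder α] (I : Finset α) :
    maxElems I ⊆ I :=
  fun _ hx => (mem_maxElems.1 hx).1

lemma isDownset_downGen [Fintype α] [PartialOrder α] (A : Finset α) : IsDownset (downGen A) := by
  intro x hx y hyx
  obtain ⟨a, ha, hxa⟩ := mem_downGen.1 hx
  exact mem_downGen.2 ⟨a, ha, hyx.trans hxa⟩

lemma Consistent.downGen [Fintype α] [PartialOrder α]
    (hup : ∀ a b a' b', incons a b → a ≤ a' → b ≤ b' → incons a' b')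
    {A : Finset α} (hA : Consistent incons A) : Consistent incons (downGen A) := by
  intro x hx y hy hxy
  obtain ⟨a, ha, hxa⟩ := mem_downGen.1 hx
  obtain ⟨b, hb, hyb⟩ := mem_downGen.1 hy
  exact hA a ha b hb (hup x y a b hxy hxa hyb)

lemma Consistent.mono {S T : Finset α} (hT : Consistent incons T) (hST : S ⊆ T) :
    Consistent incons S :=
  fun a ha b hb => hT a (hST ha) b (hST hb)

lemma consAntichain_maxElems [Fintype α] [DecidableEq α] [PartialOrder α] {I : Finset α}
    (hI : Consistent incons I) :
    ConsAntichain incons (maxElems I) := by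
  refine ⟨fun a ha b hb hne hle => ?_, hI.mono (maxElems_subset I)⟩
  exact (mem_maxElems.1 ha).2 b (maxElems_subset I hb) (lt_of_le_of_ne hle hne)

lemma IsDownset.downGen_maxElems [Fintype α] [DecidableEq α] [PartialOrder α] {I : Finset α}
    (hI : IsDownset I) : downGen (maxElems I) = I := by
  classical
  ext x
  refine ⟨fun hx => ?_, fun hx => ?_⟩
  · obtain ⟨a, ha, hxa⟩ := mem_downGen.1 hx
    exact hI a (maxElems_subset I ha) x hxa
  · obtain ⟨m, hm, hmax⟩ := (I.filter (x ≤ ·)).exists_maximal ⟨x, by simp [hx]⟩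
    rw [mem_filter] at hm
    refine mem_downGen.2 ⟨m, mem_maxElems.2 ⟨hm.1, fun y hy hmy => ?_⟩, hm.2⟩
    exact hmy.not_ge (hmax (mem_filter.2 ⟨hy, hm.2.trans hmy.le⟩) hmy.le)

lemma maxElems_downGen [Fintype α] [DecidableEq α] [PartialOrder α] {A : Finset α}
    (hA : ∀ a ∈ A, ∀ b ∈ A, a ≠ b → ¬ a ≤ b) :
    maxElems (downGen A) = A := by
  ext x
  refine ⟨fun hx => ?_, fun hx => ?_⟩
  · obtain ⟨hxA, hmax⟩ := mem_maxElems.1 hx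
    obtain ⟨a, ha, hxa⟩ := mem_downGen.1 hxA
    obtain rfl | hlt := hxa.eq_or_lt
    · exact ha
    · exact absurd hlt (hmax a (mem_downGen.2 ⟨a, ha, le_rfl⟩))
  · refine mem_maxElems.2 ⟨mem_downGen.2 ⟨x, hx, le_rfl⟩, fun y hy hxy => ?_⟩
    obtain ⟨b, hb, hyb⟩ := mem_downGen.1 hy
    have hxb := hxy.trans_le hyb
    exact hA x hx b hb hxb.ne hxb.le

open Classical in
noncomputable def cubeFaces [Fintype α] [DecidableEq α] [PartialOrder α]
    (incons : α → α → Prop) : Finset (Finset α × Finset α) :=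
  univ.filter fun p => IsFace incons p.1 p.2

open Classical in
noncomputable def consDownsets [Fintype α] [PartialOrder α] (incons : α → α → Prop) :
    Finset (Finset α) :=
  univ.filter fun I => IsDownset I ∧ Consistent incons I

open Classical in
noncomputable def consAntichains [Fintype α] [PartialOrder α] (incons : α → α → Prop) :
    Finset (Finset α) :=
  univ.filter (ConsAntichain incons)

@[simp]
lemma mem_cubeFaces [Fintype α] [DecidableEq α] [PartialOrder α] {p : Finset α × Finset α} :
    p ∈ cubeFaces incons ↔ IsFace incons p.1 p.2 := by
  simp [cubeFaces]

@[simp]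
lemma mem_consDownsets [Fintype α] [PartialOrder α] {I : Finset α} :
    I ∈ consDownsets incons ↔ IsDownset I ∧ Consistent incons I := by
  simp [consDownsets]

@[simp]
lemma mem_consAntichains [Fintype α] [PartialOrder α] {A : Finset α} :
    A ∈ consAntichains incons ↔ ConsAntichain incons A := by
  simp [consAntichains]

lemma cubeFaceCount_eq_card_filter [Fintype α] [DecidableEq α] [PartialOrder α] (i : ℕ) :
    cubeFaceCount incons i = #{p ∈ cubeFaces incons | p.2.card = i} := by
  unfold cubeFaceCount cubeFaces IsFace
  congr 1
  ext p
  simp [and_assoc]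

lemma antichainCount_eq_card_filter [Fintype α] [PartialOrder α] (j : ℕ) :
    antichainCount incons j = #{A ∈ consAntichains incons | A.card = j} := by
  unfold antichainCount consAntichains
  congr 1
  ext A
  simp

lemma sum_cubeFaces_pow_card [Fintype α] [DecidableEq α] [PartialOrder α] {R : Type*}
    [CommSemiring R] (t : R) :
    ∑ p ∈ cubeFaces incons, t ^ p.2.card =
      ∑ I ∈ consDownsets incons, (1 + t) ^ (maxElems I).card := by
  rw [sum_finset_product (cubeFaces incons) (consDownsets incons) (fun I => (maxElems I).powerset)]
  · exact sum_congr rfl fun I _ => (one_add_pow_card_eq_sum_powerset t _).symm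
  · rintro ⟨I, M⟩
    simp only [mem_cubeFaces, mem_consDownsets, IsFace, mem_powerset, and_assoc]

lemma sum_consDownsets_maxElems [Fintype α] [DecidableEq α] [PartialOrder α] {M : Type*}
    [AddCommMonoid M] (hup : ∀ a b a' b', incons a b → a ≤ a' → b ≤ b' → incons a' b')
    (g : Finset α → M) :
    ∑ I ∈ consDownsets incons, g (maxElems I) = ∑ A ∈ consAntichains incons, g A := by
  refine sum_nbij' maxElems downGen (fun I hI => ?_) (fun A hA => ?_) (fun I hI => ?_)
    (fun A hA => ?_) fun _ _ => rfl
  · exact mem_consAntichains.2 (consAntichain_maxElems (mem_consDownsets.1 hI).2)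
  · exact mem_consDownsets.2 ⟨isDownset_downGen A, (mem_consAntichains.1 hA).2.downGen hup⟩
  · exact (mem_consDownsets.1 hI).1.downGen_maxElems
  · exact maxElems_downGen (mem_consAntichains.1 hA).1

end Faces

theorem f_polynomial_cubical_eq_crossing_general (incons : P → P → Prop)
    (hup : ∀ a b a' b', incons a b → a ≤ a' → b ≤ b' → incons a' b') :
    ∀ t : ℤ,
      ∑ i ∈ Finset.range (Fintype.card P + 1), (cubeFaceCount incons i : ℤ) * t ^ i =
      ∑ j ∈ Finset.range (Fintype.card P + 1), (antichainCount incons j : ℤ) * (1 + t) ^ j := by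
  intro t
  calc ∑ i ∈ range (Fintype.card P + 1), (cubeFaceCount incons i : ℤ) * t ^ i
      = ∑ p ∈ cubeFaces incons, t ^ p.2.card := by
        simp_rw [cubeFaceCount_eq_card_filter]
        exact sum_range_card_filter_mul _ _ (fun p _ => card_le_univ p.2) _
    _ = ∑ I ∈ consDownsets incons, (1 + t) ^ (maxElems I).card := sum_cubeFaces_pow_card t
    _ = ∑ A ∈ consAntichains incons, (1 + t) ^ A.card :=
        sum_consDownsets_maxElems hup fun A => (1 + t) ^ A.card
    _ = ∑ j ∈ range (Fintype.card P + 1), (antichainCount incons j : ℤ) * (1 + t) ^ j := by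
        simp_rw [antichainCount_eq_card_filter]
        exact (sum_range_card_filter_mul _ _ (fun A _ => card_le_univ A) _).symm

/-- `f(⊞_P, t) = f(Δ_P, 1 + t)`. -/
theorem f_polynomial_cubical_eq_crossing (incons : P → P → Prop)
    (hirr : ∀ a, ¬ incons a a)
    (hsymm : ∀ a b, incons a b → incons b a)
    (hup : ∀ a b a' b', incons a b → a ≤ a' → b ≤ b' → incons a' b') :
    ∀ t : ℤ,
      ∑ i ∈ Finset.range (Fintype.card P + 1), (cubeFaceCount incons i : ℤ) * t ^ i =
      ∑ j ∈ Finset.range (Fintype.card P + 1), (antichainCount incons j : ℤ) * (1 + t) ^ j :=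
  f_polynomial_cubical_eq_crossing_general incons hup
end

section
/- Let P be a finite PIP and let C(I,M) denote the face of ⊞_P given by {I \ N : N ⊆ M}, for I a consistent downset and M ⊆ max I. Then C(I',M') ⊆ C(I,M) (i.e., {I' \ N' : N' ⊆ M'} ⊆ {I \ N : N ⊆ M}) if and only if M' ⊆ M and I \ M ⊆ I' ⊆ I. -/
open Finset

variable {P : Type*} [Fintype P] [DecidableEq P] [PartialOrder P]

/-!
Testing the two extreme vertices of `C(I',M')` suffices: `N' = ∅` gives `I' = I \ N₀` with
`N₀ ⊆ M`, and `N' = M'` forces `M' ⊆ M`. Conversely `I' \ N'` is the vertex `I \ (N' ∪ (I \ I'))`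
of `C(I,M)`.
-/

theorem maxElems_subset_s11 (I : Finset P) : maxElems I ⊆ I := by
  classical exact filter_subset _ _

namespace Finset

variable {α : Type*} [DecidableEq α] {I M I' M' : Finset α}

theorem subset_of_forall_exists_sdiff_eq (hM' : M' ⊆ I')
    (h : ∀ N' ⊆ M', ∃ N ⊆ M, I' \ N' = I \ N) : M' ⊆ M ∧ I \ M ⊆ I' ∧ I' ⊆ I := by
  obtain ⟨N₀, hN₀M, hI'⟩ := h ∅ (empty_subset _)
  rw [sdiff_empty] at hI'
  obtain ⟨N₁, hN₁M, hN₁⟩ := h M' Subset.rfl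
  have hI'I : I' ⊆ I := hI' ▸ sdiff_subset
  refine ⟨fun m hm => hN₁M ?_, hI' ▸ sdiff_subset_sdiff Subset.rfl hN₀M, hI'I⟩
  -- `m ∈ I` is missing from `I' \ M' = I \ N₁`, so it lies in `N₁`
  by_contra hmN₁
  have : m ∈ I' \ M' := hN₁ ▸ mem_sdiff.2 ⟨hI'I (hM' hm), hmN₁⟩
  exact (mem_sdiff.1 this).2 hm

theorem exists_sdiff_eq_of_subset (hM'M : M' ⊆ M) (hIM : I \ M ⊆ I') (hI'I : I' ⊆ I)
    {N' : Finset α} (hN' : N' ⊆ M') : ∃ N ⊆ M, I' \ N' = I \ N := by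
  refine ⟨N' ∪ (I \ I'), union_subset (hN'.trans hM'M) (sdiff_le_comm.1 hIM), ?_⟩
  rw [sdiff_union_distrib, sdiff_sdiff_eq_self hI'I, inter_comm, ← inter_sdiff_assoc,
      inter_eq_left.2 hI'I]

theorem forall_exists_sdiff_eq_iff (hM' : M' ⊆ I') :
    (∀ N' ⊆ M', ∃ N ⊆ M, I' \ N' = I \ N) ↔ M' ⊆ M ∧ I \ M ⊆ I' ∧ I' ⊆ I :=
  ⟨subset_of_forall_exists_sdiff_eq hM', fun ⟨hM'M, hIM, hI'I⟩ _ =>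
    exists_sdiff_eq_of_subset hM'M hIM hI'I⟩

end Finset

theorem face_subset_iff_general (incons : P → P → Prop)
    (I M I' M' : Finset P)
    (hF' : IsFace incons I' M') :
    (∀ N' ⊆ M', ∃ N ⊆ M, I' \ N' = I \ N) ↔
      (M' ⊆ M ∧ I \ M ⊆ I' ∧ I' ⊆ I) :=
  forall_exists_sdiff_eq_iff (hF'.2.2.trans (maxElems_subset_s11 I'))

/-- `C(I',M') ⊆ C(I,M)` (as sets of vertices `{I \ N : N ⊆ M}`) if and only
if `M' ⊆ M` and `I \ M ⊆ I' ⊆ I`. -/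
theorem face_subset_iff (incons : P → P → Prop)
    (hirr : ∀ a, ¬ incons a a)
    (hsymm : ∀ a b, incons a b → incons b a)
    (hup : ∀ a b a' b', incons a b → a ≤ a' → b ≤ b' → incons a' b')
    (I M I' M' : Finset P)
    (hF : IsFace incons I M) (hF' : IsFace incons I' M') :
    (∀ N' ⊆ M', ∃ N ⊆ M, I' \ N' = I \ N) ↔
      (M' ⊆ M ∧ I \ M ⊆ I' ∧ I' ⊆ I) :=
  face_subset_iff_general incons I M I' M' hF'
end
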